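/- arXiv:1810.02872 — 2 statements merged into one kernel-verified Lean document; each statement's English description precedes it below -/
import Mathlib

section
/- Let H be a weak Hopf algebra and C a left partial H-module coalgebra via ·. Then for all h ∈ H_t, k ∈ H and c ∈ C: (i) h·(k·c) = hk·c; (ii) Δ(h·c) = (h·c₁)⊗c₂; (iii) ε(h·c) = ε(ε_s(h)·c). -/
open TensorProduct Coalgebra

noncomputable section

variable (k : Type*) [Field k]

section WeakHopfDefs

variable (H : Type*) [Ring H] [Algebra k H] [Coalgebra k H]

/-- The target map `ε_t(h) = ε(1₁ h) 1₂` of a weak bialgebra. -/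
def wεt (h : H) : H :=
  (TensorProduct.lid k H)
    ((TensorProduct.map (counit (R := k) ∘ₗ LinearMap.mulRight k h) (LinearMap.id))
      (comul (R := k) (1 : H)))

/-- The source map `ε_s(h) = 1₁ ε(h 1₂)` of a weak bialgebra. -/
def wεs (h : H) : H :=
  (TensorProduct.rid k H)
    ((TensorProduct.map (LinearMap.id) (counit (R := k) ∘ₗ LinearMap.mulLeft k h))
      (comul (R := k) (1 : H)))

/-- A weak Hopf algebra structure on an algebra `H` which is also a coalgebra:
the weak bialgebra axioms together with an antipode `S`. -/
structure WeakHopf : Type _ where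
  /-- Δ is multiplicative -/
  comul_mul : ∀ h g : H, comul (R := k) (h * g) = comul (R := k) h * comul (R := k) g
  /-- ε(hgl) = Σ ε(h g₁) ε(g₂ l) -/
  counit_weak_mul : ∀ h g l : H, counit (R := k) (h * g * l)
      = LinearMap.mul' k k
          ((TensorProduct.map (counit (R := k) ∘ₗ LinearMap.mulLeft k h)
              (counit (R := k) ∘ₗ LinearMap.mulRight k l)) (comul (R := k) g))
  /-- ε(hgl) = Σ ε(h g₂) ε(g₁ l) -/
  counit_weak_mul' : ∀ h g l : H, counit (R := k) (h * g * l)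
      = LinearMap.mul' k k
          ((TensorProduct.map (counit (R := k) ∘ₗ LinearMap.mulLeft k h)
              (counit (R := k) ∘ₗ LinearMap.mulRight k l))
            ((TensorProduct.comm k H H) (comul (R := k) g)))
  /-- (1 ⊗ Δ(1))(Δ(1) ⊗ 1) = Δ²(1) -/
  comul_one_left :
      ((1 : H) ⊗ₜ[k] comul (R := k) (1 : H))
          * ((TensorProduct.assoc k H H H) (comul (R := k) (1 : H) ⊗ₜ[k] (1 : H)))
        = (LinearMap.lTensor H (comul (R := k))) (comul (R := k) (1 : H))
  /-- (Δ(1) ⊗ 1)(1 ⊗ Δ(1)) = Δ²(1) -/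
  comul_one_right :
      ((TensorProduct.assoc k H H H) (comul (R := k) (1 : H) ⊗ₜ[k] (1 : H)))
          * ((1 : H) ⊗ₜ[k] comul (R := k) (1 : H))
        = (LinearMap.lTensor H (comul (R := k))) (comul (R := k) (1 : H))
  /-- the antipode -/
  S : H →ₗ[k] H
  /-- Σ h₁ S(h₂) = ε_t(h) -/
  antipode_t : ∀ h : H,
      LinearMap.mul' k H ((LinearMap.lTensor H S) (comul (R := k) h)) = wεt k H h
  /-- Σ S(h₁) h₂ = ε_s(h) -/
  antipode_s : ∀ h : H,
      LinearMap.mul' k H ((LinearMap.rTensor H S) (comul (R := k) h)) = wεs k H h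
  /-- Σ S(h₁) h₂ S(h₃) = S(h) -/
  antipode_mid : ∀ h : H,
      LinearMap.mul' k H
        ((TensorProduct.map S (LinearMap.mul' k H ∘ₗ LinearMap.lTensor H S))
          ((LinearMap.lTensor H (comul (R := k))) (comul (R := k) h))) = S h

end WeakHopfDefs

section Actions

variable (H : Type*) [Ring H] [Algebra k H] [Coalgebra k H]
variable (C : Type*) [AddCommGroup C] [Module k C] [Coalgebra k C]

/-- The Sweedler sum `Σ (h g₁ · c₁) ε(g₂ · c₂)` appearing in (PMC3). -/
def pmc3RHS (act : H →ₗ[k] C →ₗ[k] C) (h g : H) (c : C) : C :=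
  (TensorProduct.rid k C)
    ((TensorProduct.map
        ((TensorProduct.lift act) ∘ₗ (LinearMap.rTensor C (LinearMap.mulLeft k h)))
        (counit (R := k) ∘ₗ (TensorProduct.lift act)))
      ((TensorProduct.tensorTensorTensorComm k H H C C)
        (comul (R := k) g ⊗ₜ[k] comul (R := k) c)))

/-- The Sweedler sum `Σ ε(g₁ · c₁) (h g₂ · c₂)` appearing in the symmetry condition. -/
def pmc3symRHS (act : H →ₗ[k] C →ₗ[k] C) (h g : H) (c : C) : C :=
  (TensorProduct.lid k C)
    ((TensorProduct.map
        (counit (R := k) ∘ₗ (TensorProduct.lift act))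
        ((TensorProduct.lift act) ∘ₗ (LinearMap.rTensor C (LinearMap.mulLeft k h))))
      ((TensorProduct.tensorTensorTensorComm k H H C C)
        (comul (R := k) g ⊗ₜ[k] comul (R := k) c)))

/-- (MC2)/(PMC2): `Δ(h·c) = (h₁·c₁) ⊗ (h₂·c₂)`. -/
def SweedlerComulCompat (act : H →ₗ[k] C →ₗ[k] C) : Prop :=
  ∀ (h : H) (c : C),
    comul (R := k) (act h c)
      = (TensorProduct.map (TensorProduct.lift act) (TensorProduct.lift act))
          ((TensorProduct.tensorTensorTensorComm k H H C C)
            (comul (R := k) h ⊗ₜ[k] comul (R := k) c))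

/-- `C` is a left partial `H`-module coalgebra via `act` (`act h c = h · c`). -/
structure IsPartialModuleCoalgebra (act : H →ₗ[k] C →ₗ[k] C) : Prop where
  pmc1 : ∀ c : C, act 1 c = c
  pmc2 : SweedlerComulCompat k H C act
  pmc3 : ∀ (h g : H) (c : C), act h (act g c) = pmc3RHS k H C act h g c

/-- `C` is a symmetric left partial `H`-module coalgebra via `act`. -/
structure IsSymmetricPartialModuleCoalgebra (act : H →ₗ[k] C →ₗ[k] C)
    extends IsPartialModuleCoalgebra k H C act : Prop where
  pmc3sym : ∀ (h g : H) (c : C), act h (act g c) = pmc3symRHS k H C act h g c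

/-- `C` is a left `H`-module coalgebra via `act`. -/
structure IsModuleCoalgebra (act : H →ₗ[k] C →ₗ[k] C) : Prop where
  mc1 : ∀ c : C, act 1 c = c
  mc2 : SweedlerComulCompat k H C act
  mc3 : ∀ (h g : H) (c : C), act h (act g c) = act (h * g) c
  mc4 : ∀ (h : H) (c : C), counit (R := k) (act h c) = counit (R := k) (act (wεs k H h) c)

end Actions

end

/-!
Write `x = ε_t(h)`. The weak bialgebra axioms give `Δx = (x ⊗ 1)Δ1`, hence `Δ(xg) = (x ⊗ 1)Δg`.
Since (PMC3) sees `g` in `p·(g·c)` only through `(p ⊗ 1)Δg`, this yields `x·(g·c) = xg·c` and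
`p·(x·c) = px·c`; then (PMC2) for `x·c` gives (ii).

For (iii), `ε_s(x) = S(x₁)x₂`, and `Δx` lies in `H ⊗ H_t` because `Δ1` does. Hence
`ε(S(x₁)x₂·c) = ε(S(x₁)·(x₂·c))`, which (PMC3) expands to `ε(ε_s(x₁)·c₁) ε(x₂·c₂)`.
The identity `ε_s(x₁) ⊗ x₂ = 1₁ ⊗ x1₂` turns this into `ε(1₁·c₁) ε(x·(1₂·c₂)) = ε(x·c)`.
-/

open LinearMap

section TensorSquare

variable {R : Type*} [CommRing R] {A : Type*} [Ring A] [Algebra R A]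

section

variable {B : Type*} [Ring B] [Algebra R B]

lemma tmul_one_mul_eq_rTensor (a : A) (T : A ⊗[R] B) :
    (a ⊗ₜ[R] (1 : B)) * T = rTensor B (mulLeft R a) T := by
  rw [← mulLeft_apply (R := R), mulLeft_tmul, mulLeft_one]; rfl

lemma one_tmul_mul_eq_lTensor (b : B) (T : A ⊗[R] B) :
    ((1 : A) ⊗ₜ[R] b) * T = lTensor A (mulLeft R b) T := by
  rw [← mulLeft_apply (R := R), mulLeft_tmul, mulLeft_one]; rfl

lemma mul_tmul_one_eq_rTensor (a : A) (T : A ⊗[R] B) :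
    T * (a ⊗ₜ[R] (1 : B)) = rTensor B (mulRight R a) T := by
  rw [← mulRight_apply (R := R)]
  congr 1
  ext x y
  simp

end

lemma rTensor_mul'_comp_rTensor_assoc_symm_tmul (f : A →ₗ[R] A) (u : A) (P : A ⊗[R] A) :
    rTensor A (mul' R A ∘ₗ rTensor A f) ((TensorProduct.assoc R A A A).symm (u ⊗ₜ[R] P))
      = rTensor A (mulLeft R (f u)) P := by
  induction P using TensorProduct.induction_on with
  | zero => simp
  | tmul a b => simp
  | add P P' hP hP' => simp only [TensorProduct.tmul_add, map_add, hP, hP']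

def contractFst (f : A →ₗ[R] R) : A ⊗[R] (A ⊗[R] A) →ₗ[R] A ⊗[R] A :=
  (TensorProduct.lid R (A ⊗[R] A)).toLinearMap ∘ₗ rTensor (A ⊗[R] A) f

variable (f : A →ₗ[R] R)

lemma contractFst_mul_one_tmul (X : A ⊗[R] (A ⊗[R] A)) (Y : A ⊗[R] A) :
    contractFst f (X * ((1 : A) ⊗ₜ[R] Y)) = contractFst f X * Y := by
  induction X using TensorProduct.induction_on with
  | zero => simp
  | tmul a T => simp [contractFst, Algebra.TensorProduct.tmul_mul_tmul]
  | add X X' hX hX' => simp only [add_mul, map_add, hX, hX']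

lemma contractFst_assoc_tmul_one (T : A ⊗[R] A) :
    contractFst f (TensorProduct.assoc R A A A (T ⊗ₜ[R] (1 : A)))
      = TensorProduct.lid R A (rTensor A f T) ⊗ₜ[R] (1 : A) := by
  induction T using TensorProduct.induction_on with
  | zero => simp
  | tmul a b => simp [contractFst, TensorProduct.smul_tmul']
  | add T T' hT hT' => simp only [TensorProduct.add_tmul, map_add, hT, hT']

lemma contractFst_lTensor_comul [Coalgebra R A] (E : A ⊗[R] A) :
    contractFst f (lTensor A comul E) = comul (TensorProduct.lid R A (rTensor A f E)) := by
  induction E using TensorProduct.induction_on with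
  | zero => simp
  | tmul a b => simp [contractFst]
  | add E E' hE hE' => simp only [map_add, hE, hE']

variable [Coalgebra R A]

def counitMiddle : A ⊗[R] (A ⊗[R] A) →ₗ[R] A ⊗[R] A :=
  lTensor A ((TensorProduct.lid R A).toLinearMap ∘ₗ rTensor A counit)

lemma counitMiddle_lTensor_comul (E : A ⊗[R] A) : counitMiddle (lTensor A comul E) = E := by
  have : ((TensorProduct.lid R A).toLinearMap ∘ₗ rTensor A counit) ∘ₗ comul = LinearMap.id := by
    ext a; simp [Coalgebra.rTensor_counit_comul]
  rw [counitMiddle, ← comp_apply, ← lTensor_comp, this, lTensor_id, id_apply]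

lemma counitMiddle_one_tmul_tmul_mul_assoc (p q : A) (T : A ⊗[R] A) :
    counitMiddle (((1 : A) ⊗ₜ[R] (p ⊗ₜ[R] q)) * TensorProduct.assoc R A A A (T ⊗ₜ[R] 1))
      = TensorProduct.rid R A (lTensor A (counit ∘ₗ mulLeft R p) T) ⊗ₜ[R] q := by
  induction T using TensorProduct.induction_on with
  | zero => simp
  | tmul a b => simp [counitMiddle, Algebra.TensorProduct.tmul_mul_tmul, TensorProduct.smul_tmul']
  | add T T' hT hT' => simp only [TensorProduct.add_tmul, map_add, mul_add, hT, hT']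

end TensorSquare

lemma counit_rid_lTensor_comul {R : Type*} [CommRing R] {C : Type*} [AddCommGroup C]
    [Module R C] [Coalgebra R C] (F : C →ₗ[R] C) (c : C) :
    counit (TensorProduct.rid R C (lTensor C (counit ∘ₗ F) (comul c)))
      = counit (R := R) (F c) := by
  have key (X : C ⊗[R] C) : counit (TensorProduct.rid R C (lTensor C (counit ∘ₗ F) X))
      = counit (R := R) (F (TensorProduct.lid R C (rTensor C counit X))) := by
    induction X using TensorProduct.induction_on with
    | zero => simp
    | tmul u v => simp [mul_comm]
    | add X X' hX hX' => simp only [map_add, hX, hX']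
  rw [key, Coalgebra.rTensor_counit_comul, TensorProduct.lid_tmul, one_smul]

section TargetSourceMaps

variable {k : Type*} [Field k] {H : Type*} [Ring H] [Algebra k H] [Coalgebra k H]

local notation "Δ1" => comul (R := k) (1 : H)

variable (k H) in
def wεtₗ : H →ₗ[k] H :=
  (TensorProduct.lid k H).toLinearMap ∘ₗ rTensor H counit ∘ₗ mulLeft k Δ1
    ∘ₗ (TensorProduct.mk k H H).flip 1

variable (k H) in
def wεsₗ : H →ₗ[k] H :=
  (TensorProduct.rid k H).toLinearMap ∘ₗ lTensor H counit ∘ₗ mulRight k Δ1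
    ∘ₗ TensorProduct.mk k H H 1

@[simp]
lemma wεtₗ_apply (h : H) : wεtₗ k H h = wεt k H h := by
  simp only [wεtₗ, comp_apply, flip_apply, TensorProduct.mk_apply, mulLeft_apply,
    LinearEquiv.coe_coe]
  rw [mul_tmul_one_eq_rTensor, ← comp_apply (rTensor H counit), ← rTensor_comp]; rfl

@[simp]
lemma wεsₗ_apply (h : H) : wεsₗ k H h = wεs k H h := by
  simp only [wεsₗ, comp_apply, TensorProduct.mk_apply, mulRight_apply, LinearEquiv.coe_coe]
  rw [one_tmul_mul_eq_lTensor, ← comp_apply (lTensor H counit), ← lTensor_comp]; rfl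

end TargetSourceMaps

namespace WeakHopf

variable {k : Type*} [Field k] {H : Type*} [Ring H] [Algebra k H] [Coalgebra k H]
  (wh : WeakHopf k H)
include wh

local notation "Δ1" => comul (R := k) (1 : H)

lemma comul_wεt (h : H) : comul (R := k) (wεt k H h) = (wεt k H h ⊗ₜ[k] (1 : H)) * Δ1 := by
  have hε : wεt k H h = TensorProduct.lid k H (rTensor H (counit ∘ₗ mulRight k h) Δ1) := rfl
  calc comul (R := k) (wεt k H h)
      = contractFst (counit ∘ₗ mulRight k h) (lTensor H comul Δ1) := by
        rw [contractFst_lTensor_comul, hε]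
    _ = contractFst (counit ∘ₗ mulRight k h)
          (TensorProduct.assoc k H H H (Δ1 ⊗ₜ[k] (1 : H)) * ((1 : H) ⊗ₜ[k] Δ1)) := by
        rw [wh.comul_one_right]
    _ = (wεt k H h ⊗ₜ[k] (1 : H)) * Δ1 := by
        rw [contractFst_mul_one_tmul, contractFst_assoc_tmul_one, ← hε]

lemma comul_wεt_mul (h g : H) :
    comul (R := k) (wεt k H h * g) = rTensor H (mulLeft k (wεt k H h)) (comul g) := by
  rw [wh.comul_mul, wh.comul_wεt, mul_assoc, ← wh.comul_mul, one_mul, tmul_one_mul_eq_rTensor]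

lemma comul_wεt_eq_rTensor (h : H) :
    comul (R := k) (wεt k H h) = rTensor H (mulLeft k (wεt k H h)) Δ1 := by
  simpa using wh.comul_wεt_mul h 1

lemma mul'_comp_rTensor_S_comp_comul : mul' k H ∘ₗ rTensor H wh.S ∘ₗ comul = wεsₗ k H := by
  ext h; simp [wh.antipode_s]

lemma lTensor_wεt_comul_one : lTensor H (wεtₗ k H) Δ1 = Δ1 := by
  have key (T : H ⊗[k] H) :
      counitMiddle ((1 ⊗ₜ[k] Δ1) * TensorProduct.assoc k H H H (T ⊗ₜ[k] 1))
        = lTensor H (wεtₗ k H) T := by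
    induction T using TensorProduct.induction_on with
    | zero => simp
    | tmul a b => simp [counitMiddle, Algebra.TensorProduct.tmul_mul_tmul, wεtₗ]
    | add T T' hT hT' => simp only [TensorProduct.add_tmul, map_add, mul_add, hT, hT']
  rw [← key, wh.comul_one_left, counitMiddle_lTensor_comul]

lemma lTensor_wεt_comul_wεt (h : H) :
    lTensor H (wεtₗ k H) (comul (wεt k H h)) = comul (wεt k H h) := by
  rw [wh.comul_wεt_eq_rTensor, ← comp_apply, lTensor_comp_rTensor, ← rTensor_comp_lTensor,
    comp_apply, wh.lTensor_wεt_comul_one]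

lemma rTensor_wεs_comul (h : H) :
    rTensor H (wεsₗ k H) (comul h) = ((1 : H) ⊗ₜ[k] h) * Δ1 := by
  have contract : counitMiddle ((1 ⊗ₜ[k] comul h) * TensorProduct.assoc k H H H (Δ1 ⊗ₜ[k] 1))
      = rTensor H (wεsₗ k H) (comul h) := by
    induction comul (R := k) h using TensorProduct.induction_on with
    | zero => simp
    | tmul p q => rw [counitMiddle_one_tmul_tmul_mul_assoc, rTensor_tmul, wεsₗ_apply]; rfl
    | add P P' hP hP' => simp only [TensorProduct.tmul_add, map_add, add_mul, hP, hP']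
  have comul_mulLeft : comul ∘ₗ mulLeft k h = mulLeft k (comul (R := k) h) ∘ₗ comul := by
    ext b; exact wh.comul_mul h b
  have absorb : (1 ⊗ₜ[k] comul h) * TensorProduct.assoc k H H H (Δ1 ⊗ₜ[k] 1)
      = lTensor H comul (((1 : H) ⊗ₜ[k] h) * Δ1) := by
    calc (1 ⊗ₜ[k] comul h) * TensorProduct.assoc k H H H (Δ1 ⊗ₜ[k] 1)
        = (1 ⊗ₜ[k] comul h) * ((1 ⊗ₜ[k] Δ1) * TensorProduct.assoc k H H H (Δ1 ⊗ₜ[k] 1)) := by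
          rw [← mul_assoc, Algebra.TensorProduct.tmul_mul_tmul, one_mul, ← wh.comul_mul, mul_one]
      _ = lTensor H comul (((1 : H) ⊗ₜ[k] h) * Δ1) := by
          rw [wh.comul_one_left, one_tmul_mul_eq_lTensor, one_tmul_mul_eq_lTensor, ← comp_apply,
            ← lTensor_comp, ← comul_mulLeft, lTensor_comp, comp_apply]
  rw [← contract, absorb, counitMiddle_lTensor_comul]

end WeakHopf

section PartialAction

variable {k : Type*} [Field k] {H : Type*} [Ring H] [Algebra k H]
  {C : Type*} [AddCommGroup C] [Module k C] [Coalgebra k C]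

variable (act : H →ₗ[k] C →ₗ[k] C)

/-- `T ↦ (T₁ · c₁) ⊗ (T₂ · c₂)` -/
def actComul (c : C) : H ⊗[k] H →ₗ[k] C ⊗[k] C :=
  TensorProduct.map (TensorProduct.lift act) (TensorProduct.lift act)
    ∘ₗ (TensorProduct.tensorTensorTensorComm k H H C C).toLinearMap
    ∘ₗ (TensorProduct.mk k (H ⊗[k] H) (C ⊗[k] C)).flip (comul c)

/-- `T ↦ (T₁ · c₁) ε(T₂ · c₂)` -/
def actComulCounit (c : C) : H ⊗[k] H →ₗ[k] C :=
  (TensorProduct.rid k C).toLinearMap ∘ₗ lTensor C counit ∘ₗ actComul act c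

lemma actComul_tmul (a b : H) (c : C) :
    actComul act c (a ⊗ₜ[k] b) = TensorProduct.map (act a) (act b) (comul c) := by
  simp only [actComul, comp_apply, flip_apply, TensorProduct.mk_apply, LinearEquiv.coe_coe]
  induction comul (R := k) c using TensorProduct.induction_on with
  | zero => simp
  | tmul u v => simp
  | add Q Q' hQ hQ' => simp only [TensorProduct.tmul_add, map_add, hQ, hQ']

lemma actComul_map {f g : H →ₗ[k] H} {F G : C →ₗ[k] C}
    (hf : ∀ a u, act (f a) u = F (act a u)) (hg : ∀ a u, act (g a) u = G (act a u))
    (c : C) (T : H ⊗[k] H) :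
    actComul act c (TensorProduct.map f g T) = TensorProduct.map F G (actComul act c T) := by
  suffices actComul act c ∘ₗ TensorProduct.map f g = TensorProduct.map F G ∘ₗ actComul act c from
    congr($this T)
  refine TensorProduct.ext' fun a b => ?_
  have hfa : act (f a) = F ∘ₗ act a := LinearMap.ext (hf a)
  have hgb : act (g b) = G ∘ₗ act b := LinearMap.ext (hg b)
  simp only [comp_apply, TensorProduct.map_tmul, actComul_tmul, hfa, hgb, TensorProduct.map_comp]

variable [Coalgebra k H]

local notation "Δ1" => comul (R := k) (1 : H)

lemma pmc3RHS_eq_actComulCounit (h g : H) (c : C) :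
    pmc3RHS k H C act h g c = actComulCounit act c (rTensor H (mulLeft k h) (comul g)) := by
  simp only [pmc3RHS, actComulCounit, actComul, comp_apply, flip_apply, TensorProduct.mk_apply,
    LinearEquiv.coe_coe]
  induction comul (R := k) g using TensorProduct.induction_on with
  | zero => simp
  | add P P' hP hP' => simp only [TensorProduct.add_tmul, map_add, hP, hP']
  | tmul a b =>
    induction comul (R := k) c using TensorProduct.induction_on with
    | zero => simp
    | tmul u v => simp
    | add Q Q' hQ hQ' => simp only [TensorProduct.tmul_add, map_add, hQ, hQ']

namespace IsPartialModuleCoalgebra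

variable {act} (hp : IsPartialModuleCoalgebra k H C act)
include hp

lemma comul_act (h : H) (c : C) : comul (act h c) = actComul act c (comul h) :=
  hp.pmc2 h c

lemma actComul_comul_one (c : C) : actComul act c Δ1 = comul c := by
  rw [← hp.comul_act, hp.pmc1]

lemma act_act (h g : H) (c : C) :
    act h (act g c) = actComulCounit act c (rTensor H (mulLeft k h) (comul g)) := by
  rw [hp.pmc3, pmc3RHS_eq_actComulCounit]

lemma act_mul_act_of_comul_eq {x g g' : H} (hΔ : comul g' = rTensor H (mulLeft k x) (comul g))
    (p : H) (c : C) : act (p * x) (act g c) = act p (act g' c) := by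
  rw [hp.act_act, hp.act_act, hΔ, mulLeft_mul, rTensor_comp, comp_apply]

lemma counit_actComulCounit_one_tmul_mul {x : H} (hx : ∀ a u, act (x * a) u = act x (act a u))
    (c : C) :
    counit (actComulCounit act c (((1 : H) ⊗ₜ[k] x) * Δ1)) = counit (R := k) (act x c) := by
  have hnat : actComul act c (lTensor H (mulLeft k x) Δ1) = lTensor C (act x) (comul c) := by
    rw [← hp.actComul_comul_one c]; exact actComul_map act (fun _ _ => rfl) hx c Δ1
  rw [one_tmul_mul_eq_lTensor, actComulCounit, comp_apply, comp_apply, hnat,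
    ← comp_apply (lTensor C counit), ← lTensor_comp, LinearEquiv.coe_coe,
    counit_rid_lTensor_comul]

variable (wh : WeakHopf k H)
include wh

lemma act_wεt_act (h g : H) (c : C) : act (wεt k H h) (act g c) = act (wεt k H h * g) c := by
  simpa [hp.pmc1] using hp.act_mul_act_of_comul_eq (wh.comul_wεt_mul h g) 1 c

lemma act_act_wεt (p h : H) (c : C) : act p (act (wεt k H h) c) = act (p * wεt k H h) c := by
  simpa [hp.pmc1] using (hp.act_mul_act_of_comul_eq (wh.comul_wεt_eq_rTensor h) p c).symm

lemma comul_act_wεt (h : H) (c : C) :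
    comul (act (wεt k H h) c) = rTensor C (act (wεt k H h)) (comul c) := by
  rw [hp.comul_act, wh.comul_wεt_eq_rTensor, rTensor_def, actComul_map act (G := LinearMap.id)
    (fun a u => (hp.act_wεt_act wh h a u).symm) (fun _ _ => rfl), hp.actComul_comul_one]
  rfl

lemma counit_act_wεs_of_lTensor_wεt_comul {x : H}
    (hx : lTensor H (wεtₗ k H) (comul x) = comul x) (c : C) : counit (R := k) (act (wεs k H x) c)
      = counit (actComulCounit act c (rTensor H (wεsₗ k H) (comul x))) := by
  let β : H ⊗[k] H →ₗ[k] k := counit ∘ₗ act.flip c ∘ₗ mul' k H ∘ₗ rTensor H wh.S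
  let γ : H ⊗[k] H →ₗ[k] H ⊗[k] H := rTensor H (mul' k H ∘ₗ rTensor H wh.S)
    ∘ₗ (TensorProduct.assoc k H H H).symm.toLinearMap ∘ₗ lTensor H comul
  have hβγ : β ∘ₗ lTensor H (wεtₗ k H)
      = (counit ∘ₗ actComulCounit act c ∘ₗ γ) ∘ₗ lTensor H (wεtₗ k H) :=
    TensorProduct.ext' fun u v => by
      simp [β, γ, rTensor_mul'_comp_rTensor_assoc_symm_tmul, ← hp.act_act, hp.act_act_wεt wh]
  have hγ : γ (comul x) = rTensor H (wεsₗ k H) (comul x) := by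
    simp only [γ, comp_apply, LinearEquiv.coe_coe, Coalgebra.coassoc_symm_apply]
    rw [← comp_apply (rTensor H _), ← rTensor_comp, ← wh.mul'_comp_rTensor_S_comp_comul, comp_assoc]
  calc counit (R := k) (act (wεs k H x) c) = β (comul x) := by simp [β, ← wh.antipode_s]
    _ = β (lTensor H (wεtₗ k H) (comul x)) := by rw [hx]
    _ = counit (actComulCounit act c (γ (lTensor H (wεtₗ k H) (comul x)))) :=
        congr($hβγ (comul x))
    _ = counit (actComulCounit act c (rTensor H (wεsₗ k H) (comul x))) := by rw [hx, hγ]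

lemma counit_act_wεt (h : H) (c : C) :
    counit (R := k) (act (wεt k H h) c) = counit (R := k) (act (wεs k H (wεt k H h)) c) := by
  rw [hp.counit_act_wεs_of_lTensor_wεt_comul wh (wh.lTensor_wεt_comul_wεt h),
    wh.rTensor_wεs_comul, hp.counit_actComulCounit_one_tmul_mul
      (fun a u => (hp.act_wεt_act wh h a u).symm)]

end IsPartialModuleCoalgebra

end PartialAction

/-- Properties of the action of elements of `H_t` on a partial module
coalgebra: (i) `h·(k·c) = hk·c`; (ii) `Δ(h·c) = (h·c₁) ⊗ c₂`; (iii) `ε(h·c) = ε(ε_s(h)·c)`. -/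
theorem target_elements_act_globally
    (k : Type*) [Field k] (H : Type*) [Ring H] [Algebra k H] [Coalgebra k H]
    (C : Type*) [AddCommGroup C] [Module k C] [Coalgebra k C]
    (wh : WeakHopf k H) (act : H →ₗ[k] C →ₗ[k] C)
    (hp : IsPartialModuleCoalgebra k H C act) :
    (∀ h ∈ Set.range (wεt k H), ∀ (g : H) (c : C), act h (act g c) = act (h * g) c) ∧
    (∀ h ∈ Set.range (wεt k H), ∀ c : C,
        comul (R := k) (act h c) = LinearMap.rTensor C (act h) (comul (R := k) c)) ∧
    (∀ h ∈ Set.range (wεt k H), ∀ c : C,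
        counit (R := k) (act h c) = counit (R := k) (act (wεs k H h) c)) := by
  refine ⟨?_, ?_, ?_⟩
  · rintro _ ⟨h, rfl⟩ g c
    exact hp.act_wεt_act wh h g c
  · rintro _ ⟨h, rfl⟩ c
    exact hp.comul_act_wεt wh h c
  · rintro _ ⟨h, rfl⟩ c
    exact hp.counit_act_wεt wh h c
end

section
/- Let H be a weak Hopf algebra, C a nonzero coalgebra, and λ : H → k a linear map. Then the map h⊳c := λ(h)c makes C a left H-module coalgebra if and only if (i) λ(1_H) = 1, (ii) λ(h) = λ(h₁)λ(h₂) for all h ∈ H, and (iii) λ(hk) = λ(h)λ(k) for all h,k ∈ H. -/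
/-!
Since `h ⊳ c = λ(h) c` and `C ≠ 0`, axioms (MC1)–(MC3) are conditions (i)–(iii) after cancelling
a nonzero vector (for (MC2) the vector `Δc ≠ 0`). The content is (MC4), which amounts to
`λ ∘ ε_s = λ`. In the convolution algebra `Hom(H, k)`, condition (ii) says `λ * λ = λ`, the
antipode axiom `S(h₁)h₂ = ε_s(h)` gives `(λ ∘ S) * λ = λ ∘ ε_s`, and the weak bialgebra identity
`ε_s(h₁) ⊗ h₂ = 1₁ ⊗ h1₂` gives `(λ ∘ ε_s) * λ = λ`. Hence
`λ ∘ ε_s = (λ ∘ S) * λ * λ = (λ ∘ ε_s) * λ = λ`.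
-/

open TensorProduct Coalgebra

open WithConv

section SourceMap

variable {k : Type*} [Field k] {H : Type*} [Ring H] [Algebra k H] [Coalgebra k H]

lemma wεs_eq_sum {ι : Type*} (r : Coalgebra.Repr k (1 : H) ι) (h : H) :
    wεs k H h = ∑ i ∈ r.index, counit (R := k) (h * r.right i) • r.left i := by
  simp [wεs, ← r.eq, map_sum]

variable (k H) in
def wεsLinear : H →ₗ[k] H where
  toFun := wεs k H
  map_add' x y := by
    simp only [wεs_eq_sum (ℛ k 1), add_mul, map_add, add_smul, Finset.sum_add_distrib]
  map_smul' a x := by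
    simp only [wεs_eq_sum (ℛ k 1), smul_mul_assoc, map_smul, smul_eq_mul, mul_smul,
      Finset.smul_sum, RingHom.id_apply]

@[simp] lemma wεsLinear_apply (h : H) : wεsLinear k H h = wεs k H h := rfl

-- For `x = x' ⊗ x''` both sides are `∑ 1₁ ε(x' 1'₁ 1₂) ⊗ x'' 1'₂`.
lemma map_wεsLinear_id_mul_comul_one (x : H ⊗[k] H) :
    map (wεsLinear k H) LinearMap.id (x * comul (R := k) (1 : H))
      = LinearMap.lTensor H
          ((TensorProduct.lid k H).toLinearMap ∘ₗ LinearMap.rTensor H (counit (R := k))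
            ∘ₗ LinearMap.mul k (H ⊗[k] H) x)
          (((1 : H) ⊗ₜ[k] comul (R := k) (1 : H))
            * TensorProduct.assoc k H H H (comul (R := k) (1 : H) ⊗ₜ[k] (1 : H))) := by
  induction x using TensorProduct.induction_on with
  | zero => simp
  | add x y hx hy => simp [add_mul, hx, hy, LinearMap.comp_add, LinearMap.lTensor_add]
  | tmul a b =>
    set r := ℛ k (1 : H)
    rw [← r.eq]
    simpa [Finset.mul_sum, Finset.sum_mul, wεs_eq_sum r, sum_tmul, tmul_sum, mul_assoc,
      smul_tmul'] using Finset.sum_comm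

lemma map_wεsLinear_id_comul (wh : WeakHopf k H) (h : H) :
    map (wεsLinear k H) LinearMap.id (comul (R := k) h)
      = LinearMap.lTensor H (LinearMap.mulLeft k h) (comul (R := k) (1 : H)) := by
  set ψ : H ⊗[k] H →ₗ[k] H := (TensorProduct.lid k H).toLinearMap
    ∘ₗ LinearMap.rTensor H (counit (R := k)) ∘ₗ LinearMap.mul k (H ⊗[k] H) (comul (R := k) h)
  have hψ : ψ ∘ₗ comul = LinearMap.mulLeft k h := by
    ext y
    simp [ψ, ← wh.comul_mul]
  calc map (wεsLinear k H) LinearMap.id (comul (R := k) h)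
      = map (wεsLinear k H) LinearMap.id (comul (R := k) h * comul (R := k) (1 : H)) := by
        rw [← wh.comul_mul, mul_one]
    _ = LinearMap.lTensor H ψ (((1 : H) ⊗ₜ[k] comul (R := k) (1 : H))
          * TensorProduct.assoc k H H H (comul (R := k) (1 : H) ⊗ₜ[k] (1 : H))) :=
        map_wεsLinear_id_mul_comul_one _
    _ = LinearMap.lTensor H (LinearMap.mulLeft k h) (comul (R := k) (1 : H)) := by
        rw [wh.comul_one_left, ← LinearMap.lTensor_comp_apply, hψ]

lemma toConv_comp_wεsLinear_mul_eq (wh : WeakHopf k H) (φ : H →ₐ[k] k)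
    (hφ : toConv φ.toLinearMap * toConv φ.toLinearMap = toConv φ.toLinearMap) :
    toConv (φ.toLinearMap ∘ₗ wεsLinear k H) * toConv φ.toLinearMap = toConv φ.toLinearMap := by
  have hmulLeft (h : H) : LinearMap.mul' k k ∘ₗ map φ.toLinearMap φ.toLinearMap
      ∘ₗ LinearMap.lTensor H (LinearMap.mulLeft k h)
        = φ h • (LinearMap.mul' k k ∘ₗ map φ.toLinearMap φ.toLinearMap) :=
    TensorProduct.ext' fun a b => by simp; ring
  ext h
  calc (toConv (φ.toLinearMap ∘ₗ wεsLinear k H) * toConv φ.toLinearMap) h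
      = LinearMap.mul' k k (map φ.toLinearMap φ.toLinearMap
          (LinearMap.lTensor H (LinearMap.mulLeft k h) (comul (R := k) (1 : H)))) := by
        rw [← map_wεsLinear_id_comul wh, map_map, LinearMap.comp_id]
        rfl
    _ = φ h * (toConv φ.toLinearMap * toConv φ.toLinearMap) 1 :=
        congr($(hmulLeft h) (comul (R := k) (1 : H)))
    _ = φ h := by rw [hφ]; simp

lemma toConv_comp_antipode_mul (wh : WeakHopf k H) (φ : H →ₐ[k] k) :
    toConv (φ.toLinearMap ∘ₗ wh.S) * toConv φ.toLinearMap
      = toConv (φ.toLinearMap ∘ₗ wεsLinear k H) := by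
  have hmul : φ.toLinearMap ∘ₗ LinearMap.mul' k H ∘ₗ LinearMap.rTensor H wh.S
      = LinearMap.mul' k k ∘ₗ map (φ.toLinearMap ∘ₗ wh.S) φ.toLinearMap :=
    TensorProduct.ext' fun a b => by simp
  ext h
  simpa [← wh.antipode_s] using congr($hmul (comul (R := k) h)).symm

lemma comp_wεsLinear_eq_self (wh : WeakHopf k H) (φ : H →ₐ[k] k)
    (hφ : toConv φ.toLinearMap * toConv φ.toLinearMap = toConv φ.toLinearMap) :
    φ.toLinearMap ∘ₗ wεsLinear k H = φ.toLinearMap := by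
  apply toConv_injective
  calc toConv (φ.toLinearMap ∘ₗ wεsLinear k H)
      = toConv (φ.toLinearMap ∘ₗ wh.S) * (toConv φ.toLinearMap * toConv φ.toLinearMap) := by
        rw [hφ, toConv_comp_antipode_mul]
    _ = toConv φ.toLinearMap := by
        rw [← mul_assoc, toConv_comp_antipode_mul, toConv_comp_wεsLinear_mul_eq wh φ hφ]

end SourceMap

section ScalarAction

variable {R : Type*} [CommSemiring R]

lemma Coalgebra.comul_ne_zero {C : Type*} [AddCommMonoid C] [Module R C] [Coalgebra R C]
    {c : C} (hc : c ≠ 0) : comul (R := R) c ≠ 0 := by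
  intro h
  have h1c := Coalgebra.rTensor_counit_comul (R := R) c
  rw [h, map_zero] at h1c
  exact hc (by simpa using congr(TensorProduct.lid R C $h1c.symm))

lemma map_lift_lsmul_tensorTensorTensorComm {M N : Type*} [AddCommMonoid M] [Module R M]
    [AddCommMonoid N] [Module R N] (f g : M →ₗ[R] R) (x : M ⊗[R] M) (y : N ⊗[R] N) :
    map (lift (LinearMap.lsmul R N ∘ₗ f)) (lift (LinearMap.lsmul R N ∘ₗ g))
        (tensorTensorTensorComm R M M N N (x ⊗ₜ y))
      = LinearMap.mul' R R (map f g x) • y := by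
  induction x using TensorProduct.induction_on with
  | zero => simp
  | add x x' hx hx' => simp [add_tmul, hx, hx', add_smul]
  | tmul a b =>
    induction y using TensorProduct.induction_on with
    | zero => simp
    | add y y' hy hy' => simp [tmul_add, hy, hy']
    | tmul u v => simp [smul_tmul', smul_smul, mul_comm]

end ScalarAction

/-- For a nonzero coalgebra `C`, the map `h ⊳ c := λ(h) • c` makes `C` a
left `H`-module coalgebra iff `λ(1) = 1`, `λ(h) = λ(h₁)λ(h₂)` and `λ(hk) = λ(h)λ(k)`. -/
theorem module_coalgebra_via_lambda_iff
    (k : Type*) [Field k] (H : Type*) [Ring H] [Algebra k H] [Coalgebra k H]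
    (C : Type*) [AddCommGroup C] [Module k C] [Coalgebra k C] [Nontrivial C]
    (wh : WeakHopf k H) (lam : H →ₗ[k] k) :
    IsModuleCoalgebra k H C ((LinearMap.lsmul k C) ∘ₗ lam) ↔
      (lam 1 = 1 ∧
       (∀ h : H, lam h
          = LinearMap.mul' k k ((TensorProduct.map lam lam) (comul (R := k) h))) ∧
       (∀ h g : H, lam (h * g) = lam h * lam g)) := by
  obtain ⟨c, hc⟩ := exists_ne (0 : C)
  constructor
  · intro hC
    refine ⟨smul_left_injective k hc ?_,
      fun h ↦ smul_left_injective k (comul_ne_zero (R := k) hc) ?_,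
      fun h g ↦ smul_left_injective k hc ?_⟩
    · simpa using hC.mc1 c
    · simpa [map_lift_lsmul_tensorTensorTensorComm] using hC.mc2 h c
    · simpa [smul_smul, mul_comm] using (hC.mc3 h g c).symm
  · rintro ⟨h1, h2, h3⟩
    have hεs : lam ∘ₗ wεsLinear k H = lam :=
      comp_wεsLinear_eq_self wh (AlgHom.ofLinearMap lam h1 h3)
        (WithConv.ext (LinearMap.ext fun h ↦ (h2 h).symm))
    exact
      { mc1 := fun c ↦ by simp [h1]
        mc2 := fun h c ↦ by simp [map_lift_lsmul_tensorTensorTensorComm, ← h2]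
        mc3 := fun h g c ↦ by simp [h3, smul_smul, mul_comm]
        mc4 := fun h c ↦ by simp [← wεsLinear_apply, ← LinearMap.comp_apply lam, hεs] }
end
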